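/- Let τ₁ < τ₂, B_Θ > 0, and (r, g), (r*, g*) ∈ [-B_Θ, B_Θ]². With π and π* the three-class probability vectors induced by the two anchors as above, there is a constant C > 0, depending only on B_Θ, τ₁, τ₂, such that KL(π* ‖ π) ≤ C·((r - r*)² + (g - g*)²). -/

import Mathlib

noncomputable def stdGaussianPDF (t : ℝ) : ℝ :=
  (Real.sqrt (2 * Real.pi))⁻¹ * Real.exp (-t ^ 2 / 2)

noncomputable def stdGaussianCDF (x : ℝ) : ℝ :=
  ∫ t in Set.Iic x, stdGaussianPDF t

/-- The three threshold-induced class probabilities for parameters `(r, g)`. -/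
noncomputable def classProb (τ₁ τ₂ r g : ℝ) : Fin 3 → ℝ
  | 0 => 1 - stdGaussianCDF ((r - τ₁) * Real.exp (-g))
  | 1 => stdGaussianCDF ((r - τ₁) * Real.exp (-g)) - stdGaussianCDF ((r - τ₂) * Real.exp (-g))
  | 2 => stdGaussianCDF ((r - τ₂) * Real.exp (-g))

/-
Two facts make KL(π*‖π) quadratic. First, KL(p‖q) ≤ χ²(p‖q) = Σ (p_ℓ - q_ℓ)²/q_ℓ, since
p log(p/q) ≤ p (p/q - 1) and the linear terms Σ (p_ℓ - q_ℓ) cancel. Second, on the box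
|r|, |g| ≤ B the anchors (r - τ) e^{-g} stay in a fixed interval [-R, R], on which the Gaussian
density is at least φ(R + 1); this bounds every class probability below (the middle one because
the two anchors are (τ₂ - τ₁) e^{-g} apart), while Φ is 1-Lipschitz and the anchors are Lipschitz
in (r, g) on the box, so each |π_ℓ - π*_ℓ| is linear in |r - r*| + |g - g*|.
-/

open Real MeasureTheory ProbabilityTheory Finset

lemma mul_log_div_le {p q : ℝ} (hp : 0 ≤ p) (hq : 0 < q) :
    p * log (p / q) ≤ (p - q) ^ 2 / q + (p - q) := by
  rcases hp.eq_or_lt with rfl | hp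
  · rw [zero_mul, zero_sub, neg_sq, sq, mul_div_cancel_right₀ _ hq.ne', add_neg_cancel]
  calc p * log (p / q) ≤ p * (p / q - 1) :=
        mul_le_mul_of_nonneg_left (log_le_sub_one_of_pos (div_pos hp hq)) hp.le
    _ = (p - q) ^ 2 / q + (p - q) := by field_simp; ring

theorem sum_mul_log_div_le_sum_sq_div {ι : Type*} (s : Finset ι) {p q : ι → ℝ}
    (hp : ∀ i ∈ s, 0 ≤ p i) (hq : ∀ i ∈ s, 0 < q i) (hpq : ∑ i ∈ s, p i = ∑ i ∈ s, q i) :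
    ∑ i ∈ s, p i * log (p i / q i) ≤ ∑ i ∈ s, (p i - q i) ^ 2 / q i := by
  calc ∑ i ∈ s, p i * log (p i / q i)
      ≤ ∑ i ∈ s, ((p i - q i) ^ 2 / q i + (p i - q i)) :=
        sum_le_sum fun i hi => mul_log_div_le (hp i hi) (hq i hi)
    _ = ∑ i ∈ s, (p i - q i) ^ 2 / q i := by
        rw [sum_add_distrib, sum_sub_distrib, hpq, sub_self, add_zero]

lemma abs_exp_sub_exp_le {x y c : ℝ} (hx : x ≤ c) (hy : y ≤ c) :
    |exp x - exp y| ≤ exp c * |x - y| := by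
  wlog hxy : y ≤ x generalizing x y
  · rw [abs_sub_comm, abs_sub_comm x]
    exact this hy hx (le_of_not_ge hxy)
  have hexp : exp y = exp x * exp (-(x - y)) := by rw [← exp_add]; ring_nf
  have hlin : -(x - y) + 1 ≤ exp (-(x - y)) := add_one_le_exp _
  rw [abs_of_nonneg (sub_nonneg.2 (exp_le_exp.2 hxy)), abs_of_nonneg (sub_nonneg.2 hxy), hexp]
  calc exp x - exp x * exp (-(x - y)) ≤ exp x * (x - y) := by nlinarith [exp_pos x]
    _ ≤ exp c * (x - y) := by gcongr

lemma stdGaussianPDF_eq_gaussianPDFReal : stdGaussianPDF = gaussianPDFReal 0 1 := by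
  ext t
  simp [stdGaussianPDF, gaussianPDFReal]

lemma stdGaussianPDF_pos (t : ℝ) : 0 < stdGaussianPDF t := by
  unfold stdGaussianPDF; positivity

lemma stdGaussianPDF_le_one (t : ℝ) : stdGaussianPDF t ≤ 1 := by
  have hsqrt : 1 ≤ √(2 * π) := one_le_sqrt.2 (by linarith [pi_gt_three])
  unfold stdGaussianPDF
  exact mul_le_one₀ (inv_le_one_of_one_le₀ hsqrt) (by positivity)
    (exp_le_one_iff.2 (by nlinarith [sq_nonneg t]))

lemma stdGaussianPDF_le_of_abs_le {t R : ℝ} (ht : |t| ≤ R) :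
    stdGaussianPDF R ≤ stdGaussianPDF t := by
  have hsq : t ^ 2 ≤ R ^ 2 := by
    rw [← sq_abs t]; exact pow_le_pow_left₀ (abs_nonneg t) ht 2
  unfold stdGaussianPDF
  gcongr

lemma integrable_stdGaussianPDF : Integrable stdGaussianPDF :=
  stdGaussianPDF_eq_gaussianPDFReal ▸ integrable_gaussianPDFReal 0 1

lemma integral_stdGaussianPDF : ∫ t, stdGaussianPDF t = 1 :=
  stdGaussianPDF_eq_gaussianPDFReal ▸ integral_gaussianPDFReal_eq_one 0 one_ne_zero

lemma stdGaussianCDF_le_one (x : ℝ) : stdGaussianCDF x ≤ 1 :=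
  integral_stdGaussianPDF ▸ setIntegral_le_integral integrable_stdGaussianPDF
    (.of_forall fun t => (stdGaussianPDF_pos t).le)

lemma stdGaussianCDF_sub_stdGaussianCDF (a b : ℝ) :
    stdGaussianCDF b - stdGaussianCDF a = ∫ t in a..b, stdGaussianPDF t :=
  intervalIntegral.integral_Iic_sub_Iic integrable_stdGaussianPDF.integrableOn
    integrable_stdGaussianPDF.integrableOn

lemma abs_stdGaussianCDF_sub_le (a b : ℝ) :
    |stdGaussianCDF a - stdGaussianCDF b| ≤ |a - b| := by
  rw [stdGaussianCDF_sub_stdGaussianCDF]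
  have h := intervalIntegral.norm_integral_le_of_norm_le_const (a := b) (b := a) (C := 1)
    (f := stdGaussianPDF) fun t _ => by
      rw [Real.norm_of_nonneg (stdGaussianPDF_pos t).le]; exact stdGaussianPDF_le_one t
  rwa [one_mul, Real.norm_eq_abs] at h

lemma mul_stdGaussianPDF_le_stdGaussianCDF_sub {a b R : ℝ} (hab : a ≤ b) (ha : |a| ≤ R)
    (hb : |b| ≤ R) : (b - a) * stdGaussianPDF R ≤ stdGaussianCDF b - stdGaussianCDF a := by
  rw [stdGaussianCDF_sub_stdGaussianCDF]
  calc (b - a) * stdGaussianPDF R = ∫ _ in a..b, stdGaussianPDF R := by simp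
    _ ≤ ∫ t in a..b, stdGaussianPDF t :=
        intervalIntegral.integral_mono_on hab intervalIntegrable_const
          integrable_stdGaussianPDF.intervalIntegrable fun t ht =>
            stdGaussianPDF_le_of_abs_le (abs_le.2 ⟨by linarith [(abs_le.1 ha).1, ht.1],
              by linarith [(abs_le.1 hb).2, ht.2]⟩)

lemma stdGaussianPDF_le_stdGaussianCDF {x R : ℝ} (hx : |x| ≤ R) :
    stdGaussianPDF (R + 1) ≤ stdGaussianCDF x := by
  have h := mul_stdGaussianPDF_le_stdGaussianCDF_sub (a := x - 1) (b := x) (R := R + 1)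
    (by linarith) (by linarith [abs_sub x 1, abs_one (α := ℝ)]) (by linarith)
  have h0 : 0 ≤ stdGaussianCDF (x - 1) :=
    setIntegral_nonneg measurableSet_Iic fun t _ => (stdGaussianPDF_pos t).le
  linarith

lemma stdGaussianPDF_le_one_sub_stdGaussianCDF {x R : ℝ} (hx : |x| ≤ R) :
    stdGaussianPDF (R + 1) ≤ 1 - stdGaussianCDF x := by
  have h := mul_stdGaussianPDF_le_stdGaussianCDF_sub (a := x) (b := x + 1) (R := R + 1)
    (by linarith) (by linarith) (by linarith [abs_add_le x 1, abs_one (α := ℝ)])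
  linarith [stdGaussianCDF_le_one (x + 1)]

noncomputable def anchor (τ r g : ℝ) : ℝ := (r - τ) * exp (-g)

section Anchor

variable {τ B r g rs gs : ℝ}

lemma abs_anchor_le (hr : |r| ≤ B) (hg : |g| ≤ B) : |anchor τ r g| ≤ (B + |τ|) * exp B := by
  have hexp : exp (-g) ≤ exp B := exp_le_exp.2 (by linarith [(abs_le.1 hg).1])
  rw [anchor, abs_mul, abs_of_pos (exp_pos _)]
  exact mul_le_mul (by linarith [abs_sub r τ]) hexp (exp_pos _).le
    (by linarith [abs_nonneg r, abs_nonneg τ])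

lemma abs_anchor_sub_anchor_le (hr : |r| ≤ B) (hg : |g| ≤ B) (hgs : |gs| ≤ B) :
    |anchor τ rs gs - anchor τ r g| ≤ (1 + B + |τ|) * exp B * (|r - rs| + |g - gs|) := by
  have hexp : exp (-gs) ≤ exp B := exp_le_exp.2 (by linarith [(abs_le.1 hgs).1])
  have hlip : |exp (-gs) - exp (-g)| ≤ exp B * |g - gs| := by
    simpa only [neg_sub_neg] using
      abs_exp_sub_exp_le (c := B) (neg_le.1 (abs_le.1 hgs).1) (neg_le.1 (abs_le.1 hg).1)
  have hrτ : |r - τ| ≤ B + |τ| := by linarith [abs_sub r τ]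
  have hsplit : anchor τ rs gs - anchor τ r g
      = (rs - r) * exp (-gs) + (r - τ) * (exp (-gs) - exp (-g)) := by
    simp only [anchor]; ring
  calc |anchor τ rs gs - anchor τ r g|
      ≤ |r - rs| * exp (-gs) + |r - τ| * |exp (-gs) - exp (-g)| := by
        rw [hsplit]
        refine (abs_add_le _ _).trans_eq ?_
        rw [abs_mul, abs_mul, abs_of_pos (exp_pos _), abs_sub_comm rs r]
    _ ≤ |r - rs| * exp B + (B + |τ|) * (exp B * |g - gs|) := by
        gcongr
        linarith [abs_nonneg r, abs_nonneg τ]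
    _ ≤ (1 + B + |τ|) * exp B * (|r - rs| + |g - gs|) := by
        have hBτ : 0 ≤ B + |τ| := by linarith [abs_nonneg r, abs_nonneg τ]
        nlinarith [mul_nonneg (mul_nonneg hBτ (exp_pos B).le) (abs_nonneg (r - rs)),
          mul_nonneg (exp_pos B).le (abs_nonneg (g - gs))]

end Anchor

section ClassProb

variable {τ₁ τ₂ B r g rs gs : ℝ}

lemma sum_classProb (τ₁ τ₂ r g : ℝ) : ∑ ℓ, classProb τ₁ τ₂ r g ℓ = 1 := by
  simp only [Fin.sum_univ_three, classProb]
  ring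

lemma classProb_ge (hτ : τ₁ ≤ τ₂) (hr : |r| ≤ B) (hg : |g| ≤ B) (ℓ : Fin 3) :
    min (stdGaussianPDF ((B + |τ₁| + |τ₂|) * exp B + 1))
        ((τ₂ - τ₁) * exp (-B) * stdGaussianPDF ((B + |τ₁| + |τ₂|) * exp B))
      ≤ classProb τ₁ τ₂ r g ℓ := by
  have hanchor : ∀ τ, |τ| ≤ |τ₁| + |τ₂| → |anchor τ r g| ≤ (B + |τ₁| + |τ₂|) * exp B :=
    fun τ hτ' => (abs_anchor_le hr hg).trans
      (mul_le_mul_of_nonneg_right (by linarith) (exp_pos B).le)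
  have h₁ := hanchor τ₁ (by linarith [abs_nonneg τ₂])
  have h₂ := hanchor τ₂ (by linarith [abs_nonneg τ₁])
  fin_cases ℓ
  · exact (min_le_left _ _).trans (stdGaussianPDF_le_one_sub_stdGaussianCDF h₁)
  · have hgap : (τ₂ - τ₁) * exp (-B) ≤ anchor τ₁ r g - anchor τ₂ r g := by
      rw [anchor, anchor, ← sub_mul, sub_sub_sub_cancel_left]
      exact mul_le_mul_of_nonneg_left (exp_le_exp.2 (by linarith [(abs_le.1 hg).2]))
        (sub_nonneg.2 hτ)
    have hle : anchor τ₂ r g ≤ anchor τ₁ r g :=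
      sub_nonneg.1 (hgap.trans' (mul_nonneg (sub_nonneg.2 hτ) (exp_pos _).le))
    exact (min_le_right _ _).trans <|
      (mul_le_mul_of_nonneg_right hgap (stdGaussianPDF_pos _).le).trans <|
        mul_stdGaussianPDF_le_stdGaussianCDF_sub hle h₂ h₁
  · exact (min_le_left _ _).trans (stdGaussianPDF_le_stdGaussianCDF h₂)

lemma abs_classProb_sub_le (hr : |r| ≤ B) (hg : |g| ≤ B) (hgs : |gs| ≤ B) (ℓ : Fin 3) :
    |classProb τ₁ τ₂ rs gs ℓ - classProb τ₁ τ₂ r g ℓ|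
      ≤ 2 * ((1 + B + |τ₁| + |τ₂|) * exp B) * (|r - rs| + |g - gs|) := by
  set L := (1 + B + |τ₁| + |τ₂|) * exp B
  set D := |r - rs| + |g - gs|
  have hcdf : ∀ τ, |τ| ≤ |τ₁| + |τ₂| →
      |stdGaussianCDF (anchor τ rs gs) - stdGaussianCDF (anchor τ r g)| ≤ L * D :=
    fun τ hτ => (abs_stdGaussianCDF_sub_le _ _).trans <|
      (abs_anchor_sub_anchor_le hr hg hgs).trans <| mul_le_mul_of_nonneg_right
        (mul_le_mul_of_nonneg_right (by linarith) (exp_pos B).le) (by positivity)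
  obtain ⟨h₁l, h₁r⟩ := abs_le.1 (hcdf τ₁ (by linarith [abs_nonneg τ₂]))
  obtain ⟨h₂l, h₂r⟩ := abs_le.1 (hcdf τ₂ (by linarith [abs_nonneg τ₁]))
  have hLD : 0 ≤ L * D := by linarith
  fin_cases ℓ <;> simp only [classProb] <;> rw [abs_le] <;> constructor <;>
    simp only [anchor] at h₁l h₁r h₂l h₂r <;> linarith

lemma sq_classProb_sub_le (hr : |r| ≤ B) (hg : |g| ≤ B) (hgs : |gs| ≤ B) (ℓ : Fin 3) :
    (classProb τ₁ τ₂ rs gs ℓ - classProb τ₁ τ₂ r g ℓ) ^ 2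
      ≤ 8 * ((1 + B + |τ₁| + |τ₂|) * exp B) ^ 2 * ((r - rs) ^ 2 + (g - gs) ^ 2) := by
  have hD : (|r - rs| + |g - gs|) ^ 2 ≤ 2 * ((r - rs) ^ 2 + (g - gs) ^ 2) := by
    nlinarith [sq_nonneg (|r - rs| - |g - gs|), sq_abs (r - rs), sq_abs (g - gs)]
  calc (classProb τ₁ τ₂ rs gs ℓ - classProb τ₁ τ₂ r g ℓ) ^ 2
      = |classProb τ₁ τ₂ rs gs ℓ - classProb τ₁ τ₂ r g ℓ| ^ 2 := (sq_abs _).symm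
    _ ≤ (2 * ((1 + B + |τ₁| + |τ₂|) * exp B) * (|r - rs| + |g - gs|)) ^ 2 := by
        gcongr; exact abs_classProb_sub_le hr hg hgs ℓ
    _ ≤ _ := by rw [mul_pow]; nlinarith [sq_nonneg ((1 + B + |τ₁| + |τ₂|) * exp B)]

end ClassProb

theorem two_anchor_kl_quadratic_upper (τ₁ τ₂ B : ℝ) (hτ : τ₁ < τ₂) (hB : 0 < B) :
    ∃ C > 0, ∀ r g rs gs : ℝ,
      |r| ≤ B → |g| ≤ B → |rs| ≤ B → |gs| ≤ B →
      (∑ ℓ, classProb τ₁ τ₂ rs gs ℓ *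
          Real.log (classProb τ₁ τ₂ rs gs ℓ / classProb τ₁ τ₂ r g ℓ))
        ≤ C * ((r - rs) ^ 2 + (g - gs) ^ 2) := by
  set R := (B + |τ₁| + |τ₂|) * exp B
  set m := min (stdGaussianPDF (R + 1)) ((τ₂ - τ₁) * exp (-B) * stdGaussianPDF R)
  set L := (1 + B + |τ₁| + |τ₂|) * exp B
  have hm : 0 < m := lt_min (stdGaussianPDF_pos _)
    (mul_pos (mul_pos (sub_pos.2 hτ) (exp_pos _)) (stdGaussianPDF_pos _))
  have hL : 0 < L := by positivity
  refine ⟨3 * (8 * L ^ 2) / m, by positivity, fun r g rs gs hr hg hrs hgs => ?_⟩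
  have hq : ∀ ℓ, m ≤ classProb τ₁ τ₂ r g ℓ := classProb_ge hτ.le hr hg
  have hp : ∀ ℓ, m ≤ classProb τ₁ τ₂ rs gs ℓ := classProb_ge hτ.le hrs hgs
  calc _ ≤ ∑ ℓ, (classProb τ₁ τ₂ rs gs ℓ - classProb τ₁ τ₂ r g ℓ) ^ 2 / classProb τ₁ τ₂ r g ℓ :=
        sum_mul_log_div_le_sum_sq_div _ (fun ℓ _ => hm.le.trans (hp ℓ))
          (fun ℓ _ => hm.trans_le (hq ℓ)) (by rw [sum_classProb, sum_classProb])
    _ ≤ ∑ _ : Fin 3, 8 * L ^ 2 * ((r - rs) ^ 2 + (g - gs) ^ 2) / m :=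
        sum_le_sum fun ℓ _ => div_le_div₀ (by positivity) (sq_classProb_sub_le hr hg hgs ℓ) hm
          (hq ℓ)
    _ = _ := by simp only [sum_const, card_univ, Fintype.card_fin, nsmul_eq_mul]; ring
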